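/- Let P be an RB-template (each letter of Σ_rdz labeling at most one edge) with reachability-unwinding P^⊸. Then exec_inf(P) ⊆ {π^◦ : π an infinite run of the template P^⊸}, where a run of the template P^⊸ is an infinite sequence of consecutive edges of P^⊸ starting at an initial state of P^⊸, and π^◦ erases component numbers from the states occurring in these edges. -/

import Mathlib

/-! ### Core definitions: RB-templates and RB-systems -/

/-- Edge labels: a rendezvous letter `a_j` (an action together with an index in `[k]`),
or the broadcast letter `𝔟` (represented by `Sum.inr ()`). -/
abbrev Lab (k : ℕ) (A : Type) := (A × Fin k) ⊕ Unit

/-- Edges of a labeled transition system over states `S`. -/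
abbrev EdgeT (k : ℕ) (A S : Type) := S × Lab k A × S

/-- An RB-template: a set of initial states and a set of labeled edges. -/
structure RBTemplate (k : ℕ) (A : Type) (S : Type) where
  I : Set S
  R : Set (EdgeT k A S)

/-- Broadcast totality: every state has an outgoing broadcast edge. -/
def RBTemplate.BTotal {k : ℕ} {A S : Type} (P : RBTemplate k A S) : Prop :=
  ∀ s : S, ∃ t : S, (s, Sum.inr (), t) ∈ P.R

/-- Each rendezvous letter labels at most one edge. -/
def RBTemplate.UniqLab {k : ℕ} {A S : Type} (P : RBTemplate k A S) : Prop :=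
  ∀ (ς : A × Fin k) (s t s' t' : S),
    (s, Sum.inl ς, t) ∈ P.R → (s', Sum.inl ς, t') ∈ P.R → s = s' ∧ t = t'

/-- Synchronization label of a global transition of a system whose processes are
indexed by `ι`: either a broadcast, or a `k`-wise rendezvous on action `a` by the
processes `procs 0, …, procs (k-1)`. -/
inductive Sync (k : ℕ) (A : Type) (ι : Type) where
  | bcast : Sync k A ι
  | rdz (a : A) (procs : Fin k → ι) : Sync k A ι

/-- `(f, σ, g)` is a global transition of the system with processes indexed by `ι`. -/
def RBTrans {k : ℕ} {A S : Type} (P : RBTemplate k A S) {ι : Type}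
    (f : ι → S) (σ : Sync k A ι) (g : ι → S) : Prop :=
  match σ with
  | .bcast => ∀ i, (f i, Sum.inr (), g i) ∈ P.R
  | .rdz a procs =>
      Function.Injective procs ∧
      (∀ j : Fin k, (f (procs j), Sum.inl (a, j), g (procs j)) ∈ P.R) ∧
      (∀ i, (∀ j, procs j ≠ i) → g i = f i)

/-- Process `i` moves in a transition with synchronization label `σ`. -/
def Sync.Moved {k : ℕ} {A ι : Type} (σ : Sync k A ι) (i : ι) : Prop :=
  match σ with
  | .bcast => True
  | .rdz _ procs => ∃ j, procs j = i

/-- The edge of the template taken by process `i` in the global transition `(f, σ, g)`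
(`none` if `i` does not move). -/
noncomputable def edgeAt {k : ℕ} {A S ι : Type} (f g : ι → S) (σ : Sync k A ι) (i : ι) :
    Option (EdgeT k A S) :=
  match σ with
  | .bcast => some (f i, Sum.inr (), g i)
  | .rdz a procs =>
      letI := Classical.propDecidable (∃ j, procs j = i)
      if h : ∃ j, procs j = i then some (f i, Sum.inl (a, Classical.choose h), g i)
      else none

/-- A finite path of the RB-system with processes indexed by `ι`:
a length, configurations `conf 0, …, conf len`, and transitions between them. -/
structure FinPath {k : ℕ} {A S : Type} (P : RBTemplate k A S) (ι : Type) where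
  len : ℕ
  conf : ℕ → ι → S
  sync : ℕ → Sync k A ι
  valid : ∀ t, t < len → RBTrans P (conf t) (sync t) (conf (t + 1))

/-- An infinite path of the RB-system with processes indexed by `ι`. -/
structure InfPath {k : ℕ} {A S : Type} (P : RBTemplate k A S) (ι : Type) where
  conf : ℕ → ι → S
  sync : ℕ → Sync k A ι
  valid : ∀ t, RBTrans P (conf t) (sync t) (conf (t + 1))

/-- A finite run: a finite path starting at an initial configuration. -/
def FinPath.IsRun {k : ℕ} {A S : Type} {P : RBTemplate k A S} {ι : Type}
    (p : FinPath P ι) : Prop :=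
  ∀ i, p.conf 0 i ∈ P.I

/-- An infinite run: an infinite path starting at an initial configuration. -/
def InfPath.IsRun {k : ℕ} {A S : Type} {P : RBTemplate k A S} {ι : Type}
    (p : InfPath P ι) : Prop :=
  ∀ i, p.conf 0 i ∈ P.I

/-- The projection of a finite path onto process `i`: the sequence of edges taken by `i`. -/
noncomputable def FinPath.proj {k : ℕ} {A S : Type} {P : RBTemplate k A S} {ι : Type}
    (p : FinPath P ι) (i : ι) : List (EdgeT k A S) :=
  (List.range p.len).filterMap (fun t => edgeAt (p.conf t) (p.conf (t + 1)) (p.sync t) i)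

/-- The number of broadcast transitions on a finite path. -/
noncomputable def FinPath.bcasts {k : ℕ} {A S : Type} {P : RBTemplate k A S} {ι : Type}
    (p : FinPath P ι) : ℕ :=
  Nat.card {t : ℕ // t < p.len ∧ p.sync t = Sync.bcast}

/-- The set of finite executions of the RB-system induced by `P`: projections onto
process `0` of the finite runs of the systems `P^n`, `n ∈ ℕ`. -/
def execFin {k : ℕ} {A S : Type} (P : RBTemplate k A S) : Set (List (EdgeT k A S)) :=
  {w | ∃ n : ℕ, ∃ p : FinPath P (Fin (n + 1)), p.IsRun ∧ p.proj 0 = w}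

/-- The set of infinite executions of the RB-system induced by `P`: infinite projections
onto process `0` of the runs of the systems `P^n`, `n ∈ ℕ`.  Here `ι` enumerates, in
increasing order, exactly the transitions in which process `0` moves. -/
def execInf {k : ℕ} {A S : Type} (P : RBTemplate k A S) : Set (ℕ → EdgeT k A S) :=
  {w | ∃ n : ℕ, ∃ p : InfPath P (Fin (n + 1)), p.IsRun ∧
    ∃ ι : ℕ → ℕ, StrictMono ι ∧
      (∀ t, (p.sync t).Moved 0 ↔ ∃ m, ι m = t) ∧
      (∀ m, edgeAt (p.conf (ι m)) (p.conf (ι m + 1)) (p.sync (ι m)) 0 = some (w m))}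

/-! ### The reachability-unwinding -/

/-- `X` is closed under the saturation rule for the set `J` of initial states. -/
def SatClosed {k : ℕ} {A S : Type} (P : RBTemplate k A S) (J : Set S) (X : Set S) : Prop :=
  J ⊆ X ∧ ∀ (s : S) (a : A) (_h : Fin k) (t : S), s ∈ X → (s, Sum.inl (a, _h), t) ∈ P.R →
    (∀ l : Fin k, ∃ s' t' : S, s' ∈ X ∧ (s', Sum.inl (a, l), t') ∈ P.R) → t ∈ X

/-- The saturated state set `S_i` generated from the set `J` of initial states:
the least set containing `J` and closed under the saturation rule. -/
def SatS {k : ℕ} {A S : Type} (P : RBTemplate k A S) (J : Set S) : Set S :=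
  ⋂₀ {X | SatClosed P J X}

/-- The saturated edge set `R_i` generated from the set `J` of initial states. -/
def SatR {k : ℕ} {A S : Type} (P : RBTemplate k A S) (J : Set S) : Set (EdgeT k A S) :=
  {e | ∃ (s : S) (a : A) (h : Fin k) (t : S), e = (s, Sum.inl (a, h), t) ∧
    s ∈ SatS P J ∧ e ∈ P.R ∧
    ∀ l : Fin k, ∃ s' t' : S, s' ∈ SatS P J ∧ (s', Sum.inl (a, l), t') ∈ P.R}

/-- The initial-state sets `I_i` of the components `P_i` of the reachability-unwinding
(each component `P_i = (S_i, I_i, R_i)` is completely determined by `I_i`, via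
`S_i = SatS P (compI P i)` and `R_i = SatR P (compI P i)`). -/
def compI {k : ℕ} {A S : Type} (P : RBTemplate k A S) : ℕ → Set S
  | 0 => P.I
  | i + 1 => {s | ∃ h : S, h ∈ SatS P (compI P i) ∧ (h, Sum.inr (), s) ∈ P.R}

/-- `(n, m)` is the (least) lasso pair of the unwinding construction: the components
`P_0, …, P_m` are pairwise distinct and `P_n = P_{m+1}`.  The prefix length is `n` and
the period is `r = m + 1 - n`. -/
def IsLasso {k : ℕ} {A S : Type} (P : RBTemplate k A S) (n m : ℕ) : Prop :=
  n ≤ m ∧ compI P n = compI P (m + 1) ∧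
    ∀ i j : ℕ, i < j → j ≤ m → compI P i ≠ compI P j

/-- The component number associated with `i`, for the lasso pair `(n, m)`. -/
def compAt (n m i : ℕ) : ℕ := if i ≤ m then i else n + (i - n) % (m + 1 - n)

/-- The reachability-unwinding `P^⊸` of `P`, for the lasso pair `(n, m)`: states are
pairs (state of `P`, component number). -/
def unwind {k : ℕ} {A S : Type} (P : RBTemplate k A S) (n m : ℕ) :
    RBTemplate k A (S × ℕ) where
  I := {x | x.1 ∈ P.I ∧ x.2 = 0}
  R := {e | (∃ (s t : S) (ς : A × Fin k) (i : ℕ), i ≤ m ∧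
              e = ((s, i), Sum.inl ς, (t, i)) ∧ (s, Sum.inl ς, t) ∈ SatR P (compI P i)) ∨
            (∃ (s t : S) (i : ℕ), i ≤ m ∧
              e = ((s, i), Sum.inr (), (t, compAt n m (i + 1))) ∧
              s ∈ SatS P (compI P i) ∧ (s, Sum.inr (), t) ∈ P.R)}

/-- Erasing the component numbers from an edge of the unwinding. -/
def erE {k : ℕ} {A S : Type} (e : EdgeT k A (S × ℕ)) : EdgeT k A S :=
  (e.1.1, e.2.1, e.2.2.1)

/-- An infinite run of a template viewed as an LTS: an infinite sequence of
consecutive edges starting at an initial state. -/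
def TemplateRunInf {k : ℕ} {A S : Type} (P' : RBTemplate k A S)
    (w : ℕ → EdgeT k A S) : Prop :=
  (∀ t, w t ∈ P'.R) ∧ (∀ t, (w (t + 1)).1 = (w t).2.2) ∧ (w 0).1 ∈ P'.I

/-!
A process that has seen `b` broadcasts is in a state of the saturated component `S_b`: a
rendezvous keeps all `k` participants inside `S_b` (they witness the saturation rule for each
other), and a broadcast moves every process into `I_{b+1} ⊆ S_{b+1}`.  Hence each edge of
process `0`, tagged on both ends with the component `comp` of the number of broadcasts seen so
far, is an edge of `P^⊸`; the lasso equation `I_n = I_{m+1}` gives `I_{comp b} = I_b`, which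
makes the tagging legitimate beyond `m`.
-/

section Saturation

variable {k : ℕ} {A S : Type} (P : RBTemplate k A S) (J : Set S)

lemma satClosed_satS : SatClosed P J (SatS P J) := by
  refine ⟨fun s hs => Set.mem_sInter.2 fun X hX => hX.1 hs, ?_⟩
  intro s a h t hs he hall
  refine Set.mem_sInter.2 fun X hX => hX.2 s a h t (Set.mem_sInter.1 hs X hX) he fun l => ?_
  obtain ⟨s', t', hs', he'⟩ := hall l
  exact ⟨s', t', Set.mem_sInter.1 hs' X hX, he'⟩

lemma subset_satS : J ⊆ SatS P J := (satClosed_satS P J).1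

end Saturation

section Unwinding

variable {k : ℕ} {A S : Type} {P : RBTemplate k A S} {n m : ℕ}

lemma compI_add_eq_of_eq {i j : ℕ} (h : compI P i = compI P j) (d : ℕ) :
    compI P (i + d) = compI P (j + d) := by
  induction d with
  | zero => exact h
  | succ d ih =>
    show compI P (i + d + 1) = compI P (j + d + 1)
    simp only [compI, ih]

lemma IsLasso.periodic (hL : IsLasso P n m) :
    Function.Periodic (fun j => compI P (n + j)) (m + 1 - n) := fun j => by
  show compI P (n + (j + (m + 1 - n))) = compI P (n + j)
  rw [show n + (j + (m + 1 - n)) = m + 1 + j by have := hL.1; omega]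
  exact (compI_add_eq_of_eq hL.2.1 j).symm

lemma compAt_of_le (hnm : n ≤ m) {i : ℕ} (hi : n ≤ i) :
    compAt n m i = n + (i - n) % (m + 1 - n) := by
  unfold compAt
  split_ifs with h
  · rw [Nat.mod_eq_of_lt (by omega)]; omega
  · rfl

lemma compAt_of_lt (hnm : n ≤ m) {i : ℕ} (hi : i < n) : compAt n m i = i :=
  if_pos (by omega)

lemma compAt_le (hnm : n ≤ m) (i : ℕ) : compAt n m i ≤ m := by
  rcases lt_or_ge i n with hi | hi
  · rw [compAt_of_lt hnm hi]; omega
  · rw [compAt_of_le hnm hi]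
    have := Nat.mod_lt (i - n) (show 0 < m + 1 - n by omega)
    omega

lemma compAt_zero : compAt n m 0 = 0 := if_pos (Nat.zero_le m)

lemma compAt_compAt_add_one (hnm : n ≤ m) (i : ℕ) :
    compAt n m (compAt n m i + 1) = compAt n m (i + 1) := by
  rcases lt_or_ge i n with hi | hi
  · rw [compAt_of_lt hnm hi]
  · rw [compAt_of_le hnm hi, compAt_of_le hnm (by omega), compAt_of_le hnm (by omega),
      show n + (i - n) % (m + 1 - n) + 1 - n = (i - n) % (m + 1 - n) + 1 by omega,
      show i + 1 - n = i - n + 1 by omega, Nat.mod_add_mod]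

lemma IsLasso.compI_compAt (hL : IsLasso P n m) (i : ℕ) :
    compI P (compAt n m i) = compI P i := by
  rcases lt_or_ge i n with hi | hi
  · rw [compAt_of_lt hL.1 hi]
  · rw [compAt_of_le hL.1 hi]
    convert hL.periodic.map_mod_nat (i - n) using 2
    omega

end Unwinding

section Executions

variable {k : ℕ} {A S ι : Type} {P : RBTemplate k A S}

def Sync.bcastInd : Sync k A ι → ℕ
  | .bcast => 1
  | .rdz _ _ => 0

def bcastCount (σ : ℕ → Sync k A ι) : ℕ → ℕ
  | 0 => 0
  | t + 1 => bcastCount σ t + (σ t).bcastInd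

lemma RBTrans.eq_of_not_moved {f g : ι → S} {σ : Sync k A ι} {i : ι}
    (hT : RBTrans P f σ g) (hi : ¬σ.Moved i) : g i = f i ∧ σ.bcastInd = 0 := by
  cases σ with
  | bcast => exact absurd trivial hi
  | rdz a procs => exact ⟨hT.2.2 i fun j hj => hi ⟨j, hj⟩, rfl⟩

lemma RBTrans.mem_satS {f g : ι → S} {σ : Sync k A ι} {b : ℕ} (hT : RBTrans P f σ g)
    (hf : ∀ j, f j ∈ SatS P (compI P b)) (i : ι) :
    g i ∈ SatS P (compI P (b + σ.bcastInd)) := by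
  cases σ with
  | bcast => exact subset_satS P _ ⟨f i, hf i, hT i⟩
  | rdz a procs =>
    obtain ⟨-, hmove, hstay⟩ := hT
    by_cases hi : ∃ j, procs j = i
    · obtain ⟨j, rfl⟩ := hi
      exact (satClosed_satS P _).2 _ a j _ (hf _) (hmove j)
        fun l => ⟨_, _, hf (procs l), hmove l⟩
    · rw [hstay i fun j hj => hi ⟨j, hj⟩]
      exact hf i

lemma InfPath.conf_mem_satS (p : InfPath P ι) (hrun : p.IsRun) (t : ℕ) (i : ι) :
    p.conf t i ∈ SatS P (compI P (bcastCount p.sync t)) := by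
  induction t generalizing i with
  | zero => exact subset_satS P _ (hrun i)
  | succ t ih => exact (p.valid t).mem_satS ih i

lemma InfPath.conf_eq_of_not_moved (p : InfPath P ι) (i : ι) {u v : ℕ} (huv : u ≤ v)
    (h : ∀ x, u ≤ x → x < v → ¬(p.sync x).Moved i) :
    p.conf v i = p.conf u i ∧ bcastCount p.sync v = bcastCount p.sync u := by
  induction v, huv using Nat.le_induction with
  | base => exact ⟨rfl, rfl⟩
  | succ v huv ih =>
    obtain ⟨hconf, hcount⟩ := ih fun x hx hxv => h x hx (by omega)
    obtain ⟨hstay, hind⟩ := (p.valid v).eq_of_not_moved (h v huv (lt_add_one v))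
    exact ⟨hstay.trans hconf, by simp only [bcastCount, hind, hcount, add_zero]⟩

lemma edgeAt_rdz_eq_some {f g : ι → S} {a : A} {procs : Fin k → ι} {i : ι}
    {e : EdgeT k A S} (he : edgeAt f g (.rdz a procs) i = some e) :
    ∃ j, procs j = i ∧ e = (f i, Sum.inl (a, j), g i) := by
  dsimp only [edgeAt] at he
  split_ifs at he with h
  exact ⟨_, Classical.choose_spec h, (Option.some.inj he).symm⟩

lemma edgeAt_eq_some_endpoints {f g : ι → S} {σ : Sync k A ι} {i : ι} {e : EdgeT k A S}
    (he : edgeAt f g σ i = some e) : e.1 = f i ∧ e.2.2 = g i := by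
  cases σ with
  | bcast => obtain rfl := Option.some.inj he; exact ⟨rfl, rfl⟩
  | rdz a procs => obtain ⟨j, -, rfl⟩ := edgeAt_rdz_eq_some he; exact ⟨rfl, rfl⟩

lemma IsLasso.mem_unwind_of_edgeAt {n m : ℕ} (hL : IsLasso P n m) {f g : ι → S}
    {σ : Sync k A ι} {b : ℕ} {i : ι} {e : EdgeT k A S} (hT : RBTrans P f σ g)
    (hf : ∀ j, f j ∈ SatS P (compI P b)) (he : edgeAt f g σ i = some e) :
    ((e.1, compAt n m b), e.2.1, (e.2.2, compAt n m (b + σ.bcastInd))) ∈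
      (unwind P n m).R := by
  have hf' : ∀ j, f j ∈ SatS P (compI P (compAt n m b)) := by
    rwa [hL.compI_compAt]
  cases σ with
  | bcast =>
    obtain rfl := Option.some.inj he
    exact Or.inr ⟨_, _, _, compAt_le hL.1 b, by rw [compAt_compAt_add_one hL.1]; rfl,
      hf' i, hT i⟩
  | rdz a procs =>
    obtain ⟨j, rfl, rfl⟩ := edgeAt_rdz_eq_some he
    exact Or.inl ⟨_, _, _, _, compAt_le hL.1 b, rfl,
      ⟨_, a, j, _, rfl, hf' _, hT.2.1 j, fun l => ⟨_, _, hf' (procs l), hT.2.1 l⟩⟩⟩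

end Executions

lemma StrictMono.notMem_range_of_lt_of_lt {ι : ℕ → ℕ} (hι : StrictMono ι) {t x : ℕ}
    (h₁ : ι t < x) (h₂ : x < ι (t + 1)) : x ∉ Set.range ι := by
  rintro ⟨s, rfl⟩
  have := hι.lt_iff_lt.1 h₁
  have := hι.lt_iff_lt.1 h₂
  omega

lemma StrictMono.notMem_range_of_lt_zero {ι : ℕ → ℕ} (hι : StrictMono ι) {x : ℕ}
    (h : x < ι 0) : x ∉ Set.range ι := by
  rintro ⟨s, rfl⟩
  exact absurd (hι.monotone (Nat.zero_le s)) (not_le.2 h)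

theorem execInf_subset_erased_template_runs_general
    {k : ℕ} {A S : Type}
    (P : RBTemplate k A S)
    (n₀ m : ℕ) (hL : IsLasso P n₀ m) :
    execInf P ⊆
      {w | ∃ π : ℕ → EdgeT k A (S × ℕ),
        TemplateRunInf (unwind P n₀ m) π ∧ ∀ t, erE (π t) = w t} := by
  rintro w ⟨n, p, hrun, ι, hι, hmoved, hedge⟩
  have hends := fun t => edgeAt_eq_some_endpoints (hedge t)
  have hgap : ∀ t, p.conf (ι (t + 1)) 0 = p.conf (ι t + 1) 0 ∧
      bcastCount p.sync (ι (t + 1)) = bcastCount p.sync (ι t + 1) := fun t =>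
    p.conf_eq_of_not_moved 0 (hι (lt_add_one t)) fun x hx hxv hmv =>
      hι.notMem_range_of_lt_of_lt hx hxv ((hmoved x).1 hmv)
  have hstart : p.conf (ι 0) 0 = p.conf 0 0 ∧ bcastCount p.sync (ι 0) = 0 :=
    p.conf_eq_of_not_moved 0 (Nat.zero_le _) fun x _ hx hmv =>
      hι.notMem_range_of_lt_zero hx ((hmoved x).1 hmv)
  refine ⟨fun t => (((w t).1, compAt n₀ m (bcastCount p.sync (ι t))), (w t).2.1,
      ((w t).2.2, compAt n₀ m (bcastCount p.sync (ι t + 1)))), ⟨fun t => ?_, fun t => ?_, ?_⟩,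
      fun t => rfl⟩
  · exact hL.mem_unwind_of_edgeAt (p.valid (ι t)) (p.conf_mem_satS hrun (ι t)) (hedge t)
  · simp only [(hends (t + 1)).1, (hends t).2, (hgap t).1, (hgap t).2]
  · refine ⟨?_, ?_⟩
    · show (w 0).1 ∈ P.I
      rw [(hends 0).1, hstart.1]
      exact hrun 0
    · show compAt n₀ m (bcastCount p.sync (ι 0)) = 0
      rw [hstart.2, compAt_zero]

/-- Every infinite execution of the RB-system induced by `P` is an
infinite run of the template `P^⊸` with component numbers erased. -/
theorem execInf_subset_erased_template_runs
    {k : ℕ} {A S : Type} [Fintype A] [Fintype S] (hk : 2 ≤ k)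
    (P : RBTemplate k A S) (hTot : P.BTotal) (hU : P.UniqLab)
    (n₀ m : ℕ) (hL : IsLasso P n₀ m) :
    execInf P ⊆
      {w | ∃ π : ℕ → EdgeT k A (S × ℕ),
        TemplateRunInf (unwind P n₀ m) π ∧ ∀ t, erE (π t) = w t} :=
  execInf_subset_erased_template_runs_general P n₀ m hL
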